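/- arXiv:2509.16672 — 2 statements merged into one kernel-verified Lean document; each statement's English description precedes it below -/
import Mathlib

section
/- Let s, t ∈ ℂ with |s| > |t|. Then for all z, w ∈ ℂ, e^{−(|z|²+|w|²)/2}·|K^{(s,t)}(z,w)| ≤ C · exp[ −((|s|²−|t|²−1)/(2|s|²·(3|s|²−|t|²+1)))·( |s|²·(|z|²+|w|²) + 2·Re(s·conj(z)·w) ) ]. If moreover |s|² ≥ |t|² + 1, then also e^{−(|z|²+|w|²)/2}·|K^{(s,t)}(z,w)| ≤ C · exp[ −((|s|²−|t|²−1)/(2|s|²·(3|s|²−|t|²+1)))·|z + s·w|² ] for all z, w ∈ ℂ. -/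
open MeasureTheory Real Filter

/-- Principal branch of the complex square root. -/
noncomputable def csqrt (z : ℂ) : ℂ := z ^ ((1 : ℂ) / 2)

/-- The canonical integral kernel `K^{(s,t)}(z,w)`. -/
noncomputable def Kst (s t z w : ℂ) : ℂ :=
  (csqrt s)⁻¹ *
    Complex.exp ((t * z ^ 2 - (starRingEnd ℂ) t * ((starRingEnd ℂ) w) ^ 2
      + 2 * z * (starRingEnd ℂ) w) / (2 * s))

/-!
Write `a = ‖s‖`, `b = ‖t‖`, `u = ‖z‖² + ‖w‖²` and `r = Re (s z̄ w)`. Then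
`‖K‖ = a^{-1/2} e^{Re E}` with `Re E = Re (t (s̄ z² - s w²)) / (2a²) + r / a²`, and
`‖s̄ z² - s w²‖² = p q` for `p = a u + 2r ≥ 0`, `q = a u - 2r ≥ 0`. Bounding `Re (t ⋯)` by `b √(pq)`,
the first estimate reduces (with `C ≥ a^{-1/2}`) to `b N √(pq) ≤ α p + β q`, where
`N = 3a² - b² + 1`, `α = a (a - 1)² + b²`, `β = a (a + 1)² - b²`. This is weighted AM–GM, because
`4αβ - b²N² = (a² - b² - 1)² (4a² - b²) ≥ 0`. When `a² ≥ b² + 1`, the decay rate is nonnegative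
and `a ≥ 1` gives `‖z + s w‖² ≤ a² u + 2r`, which yields the second estimate.
-/

open ComplexConjugate

noncomputable def decayRate (a b : ℝ) : ℝ :=
  (a ^ 2 - b ^ 2 - 1) / (2 * a ^ 2 * (3 * a ^ 2 - b ^ 2 + 1))

lemma norm_inv_csqrt (s : ℂ) : ‖(csqrt s)⁻¹‖ = ‖s‖ ^ (-(1 : ℝ) / 2) := by
  rw [csqrt, norm_inv, show (1 : ℂ) / 2 = ((1 / 2 : ℝ) : ℂ) by norm_num, Complex.norm_cpow_real,
    neg_div, Real.rpow_neg (norm_nonneg s)]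

lemma norm_Kst (s t z w : ℂ) :
    ‖Kst s t z w‖ = ‖s‖ ^ (-(1 : ℝ) / 2) *
      Real.exp ((t * z ^ 2 - conj t * conj w ^ 2 + 2 * z * conj w) / (2 * s)).re := by
  rw [Kst, norm_mul, norm_inv_csqrt, Complex.norm_exp]

lemma re_Kst_exponent {s : ℂ} (hs : s ≠ 0) (t z w : ℂ) :
    ((t * z ^ 2 - conj t * conj w ^ 2 + 2 * z * conj w) / (2 * s)).re
      = (t * (conj s * z ^ 2 - s * w ^ 2)).re / (2 * ‖s‖ ^ 2)
        + (s * conj z * w).re / ‖s‖ ^ 2 := by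
  have h : Complex.normSq s ≠ 0 := by simpa using hs
  rw [Complex.sq_norm, Complex.div_re, Complex.normSq_mul, Complex.normSq_ofNat]
  simp only [Complex.normSq_apply, Complex.mul_re, Complex.mul_im, Complex.sub_re,
    Complex.sub_im, Complex.add_re, Complex.add_im, Complex.conj_re, Complex.conj_im, pow_two,
    Complex.re_ofNat, Complex.im_ofNat] at h ⊢
  field_simp
  ring

lemma norm_conj_mul_sq_sub_mul_sq_sq (s z w : ℂ) :
    ‖conj s * z ^ 2 - s * w ^ 2‖ ^ 2
      = (‖s‖ * (‖z‖ ^ 2 + ‖w‖ ^ 2) + 2 * (s * conj z * w).re)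
        * (‖s‖ * (‖z‖ ^ 2 + ‖w‖ ^ 2) - 2 * (s * conj z * w).re) := by
  rw [show ∀ a u r : ℝ, (a * u + 2 * r) * (a * u - 2 * r) = a ^ 2 * u ^ 2 - 4 * r ^ 2 by
    intros; ring]
  simp only [Complex.sq_norm]
  simp only [Complex.normSq_apply, Complex.mul_re, Complex.mul_im, Complex.sub_re,
    Complex.sub_im, Complex.conj_re, Complex.conj_im, pow_two]
  ring

lemma abs_two_mul_re_mul_conj_mul_le (s z w : ℂ) :
    |2 * (s * conj z * w).re| ≤ ‖s‖ * (‖z‖ ^ 2 + ‖w‖ ^ 2) := by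
  calc |2 * (s * conj z * w).re| ≤ 2 * ‖s * conj z * w‖ := by
        rw [abs_mul, abs_two]; gcongr; exact Complex.abs_re_le_norm _
    _ = ‖s‖ * (2 * ‖z‖ * ‖w‖) := by rw [norm_mul, norm_mul, Complex.norm_conj]; ring
    _ ≤ ‖s‖ * (‖z‖ ^ 2 + ‖w‖ ^ 2) := by gcongr; exact two_mul_le_add_sq _ _

lemma mul_sqrt_mul_le_add {α β p q c : ℝ} (hα : 0 ≤ α) (hβ : 0 ≤ β) (hp : 0 ≤ p) (hq : 0 ≤ q)
    (hc : c ^ 2 ≤ 4 * α * β) : c * √(p * q) ≤ α * p + β * q := by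
  have hc' : c ≤ 2 * √α * √β := by
    calc c ≤ |c| := le_abs_self c
      _ ≤ √(4 * α * β) := Real.abs_le_sqrt hc
      _ = 2 * √α * √β := by
        rw [Real.sqrt_mul (by positivity), Real.sqrt_mul (by norm_num),
          show (4 : ℝ) = 2 ^ 2 by norm_num, Real.sqrt_sq zero_le_two]
  calc c * √(p * q) ≤ 2 * √α * √β * √(p * q) := by gcongr
    _ = 2 * √(α * p) * √(β * q) := by
      rw [Real.sqrt_mul hp, Real.sqrt_mul hα, Real.sqrt_mul hβ]; ring
    _ ≤ √(α * p) ^ 2 + √(β * q) ^ 2 := two_mul_le_add_sq _ _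
    _ = α * p + β * q := by rw [Real.sq_sqrt (by positivity), Real.sq_sqrt (by positivity)]

lemma exponent_le_neg_decayRate_mul {a b u r : ℝ} (hb : 0 ≤ b) (hba : b < a)
    (hp : 0 ≤ a * u + 2 * r) (hq : 0 ≤ a * u - 2 * r) :
    -u / 2 + b * √((a * u + 2 * r) * (a * u - 2 * r)) / (2 * a ^ 2) + r / a ^ 2
      ≤ -decayRate a b * (a ^ 2 * u + 2 * r) := by
  have ha : 0 < a := hb.trans_lt hba
  have hb2 : b ^ 2 < a ^ 2 := by gcongr
  have hN : 0 < 3 * a ^ 2 - b ^ 2 + 1 := by nlinarith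
  set α := a * (a - 1) ^ 2 + b ^ 2
  set β := a * (a + 1) ^ 2 - b ^ 2
  have hβ : 0 ≤ β := by nlinarith
  have key : b * (3 * a ^ 2 - b ^ 2 + 1) * √((a * u + 2 * r) * (a * u - 2 * r))
      ≤ α * (a * u + 2 * r) + β * (a * u - 2 * r) := by
    refine mul_sqrt_mul_le_add (by positivity) hβ hp hq ?_
    calc (b * (3 * a ^ 2 - b ^ 2 + 1)) ^ 2
        ≤ (b * (3 * a ^ 2 - b ^ 2 + 1)) ^ 2 + (a ^ 2 - b ^ 2 - 1) ^ 2 * (4 * a ^ 2 - b ^ 2) :=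
          le_add_of_nonneg_right (mul_nonneg (sq_nonneg _) (by nlinarith))
      _ = 4 * α * β := by ring
  have h : -decayRate a b * (a ^ 2 * u + 2 * r)
      - (-u / 2 + b * √((a * u + 2 * r) * (a * u - 2 * r)) / (2 * a ^ 2) + r / a ^ 2)
      = (α * (a * u + 2 * r) + β * (a * u - 2 * r)
          - b * (3 * a ^ 2 - b ^ 2 + 1) * √((a * u + 2 * r) * (a * u - 2 * r)))
        / (2 * a ^ 2 * (3 * a ^ 2 - b ^ 2 + 1)) := by
    simp only [decayRate, α, β]
    -- `field_simp` cannot see through `3 * a ^ 2 - b ^ 2 + 1 ≠ 0` unless it is an atom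
    generalize hN_def : 3 * a ^ 2 - b ^ 2 + 1 = N at hN ⊢
    field_simp
    rw [← hN_def]
    ring
  rw [← sub_nonneg, h]
  exact div_nonneg (sub_nonneg.2 key) (by positivity)

lemma exp_mul_norm_Kst_le {s t : ℂ} (hst : ‖t‖ < ‖s‖) (z w : ℂ) :
    Real.exp (-(‖z‖ ^ 2 + ‖w‖ ^ 2) / 2) * ‖Kst s t z w‖ ≤
      ‖s‖ ^ (-(1 : ℝ) / 2) * Real.exp (-decayRate ‖s‖ ‖t‖ *
        (‖s‖ ^ 2 * (‖z‖ ^ 2 + ‖w‖ ^ 2) + 2 * (s * conj z * w).re)) := by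
  have hs : s ≠ 0 := norm_pos_iff.1 ((norm_nonneg t).trans_lt hst)
  rw [norm_Kst, mul_left_comm, ← Real.exp_add, re_Kst_exponent hs]
  gcongr
  obtain ⟨hq, hp⟩ := abs_le.1 (abs_two_mul_re_mul_conj_mul_le s z w)
  have hD : (t * (conj s * z ^ 2 - s * w ^ 2)).re ≤ ‖t‖ *
      √((‖s‖ * (‖z‖ ^ 2 + ‖w‖ ^ 2) + 2 * (s * conj z * w).re)
        * (‖s‖ * (‖z‖ ^ 2 + ‖w‖ ^ 2) - 2 * (s * conj z * w).re)) := by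
    rw [← norm_conj_mul_sq_sub_mul_sq_sq, Real.sqrt_sq (norm_nonneg _), ← norm_mul]
    exact Complex.re_le_norm _
  have hD' := div_le_div_of_nonneg_right hD (by positivity : (0 : ℝ) ≤ 2 * ‖s‖ ^ 2)
  have := exponent_le_neg_decayRate_mul (u := ‖z‖ ^ 2 + ‖w‖ ^ 2) (r := (s * conj z * w).re)
    (norm_nonneg t) hst (by linarith) (by linarith)
  linarith

lemma norm_add_mul_sq_le {s : ℂ} (hs : 1 ≤ ‖s‖) (z w : ℂ) :
    ‖z + s * w‖ ^ 2 ≤ ‖s‖ ^ 2 * (‖z‖ ^ 2 + ‖w‖ ^ 2) + 2 * (s * conj z * w).re := by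
  have h : ‖z + s * w‖ ^ 2 = ‖z‖ ^ 2 + ‖s‖ ^ 2 * ‖w‖ ^ 2 + 2 * (s * conj z * w).re := by
    simp only [Complex.sq_norm, Complex.normSq_apply, Complex.mul_re, Complex.mul_im,
      Complex.add_re, Complex.add_im, Complex.conj_re, Complex.conj_im]
    ring
  rw [h]
  nlinarith [sq_nonneg ‖z‖, one_le_pow₀ (n := 2) hs]

lemma rpow_neg_half_le_kernel_constant {a b : ℝ} (hb : 0 ≤ b) (hba : b < a) :
    a ^ (-(1 : ℝ) / 2) ≤ a ^ (-(1 : ℝ) / 2) *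
      (2 * a / √(4 * a ^ 2 - b ^ 2)) ^ (2 * (4 * a ^ 2 - b ^ 2) / (3 * a ^ 2 - b ^ 2 + 1)) := by
  have ha : 0 < a := hb.trans_lt hba
  have hb2 : b ^ 2 < a ^ 2 := by gcongr
  have hsqrt : √(4 * a ^ 2 - b ^ 2) ≤ 2 * a := Real.sqrt_le_iff.2 ⟨by positivity, by nlinarith⟩
  refine le_mul_of_one_le_right (by positivity) (Real.one_le_rpow ?_ ?_)
  · exact (one_le_div (Real.sqrt_pos.2 (by nlinarith))).2 hsqrt
  · exact div_nonneg (by nlinarith) (by nlinarith)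

theorem stmt1 (s t : ℂ) (hst : ‖t‖ < ‖s‖) (C : ℝ)
    (hC : C = (‖s‖) ^ (-(1 : ℝ) / 2) *
      (2 * ‖s‖ / Real.sqrt (4 * ‖s‖ ^ 2 - ‖t‖ ^ 2)) ^
        (2 * (4 * ‖s‖ ^ 2 - ‖t‖ ^ 2) /
          (3 * ‖s‖ ^ 2 - ‖t‖ ^ 2 + 1))) :
    (∀ z w : ℂ,
      Real.exp (-(‖z‖ ^ 2 + ‖w‖ ^ 2) / 2) * ‖Kst s t z w‖ ≤
        C * Real.exp (-((‖s‖ ^ 2 - ‖t‖ ^ 2 - 1) /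
            (2 * ‖s‖ ^ 2 * (3 * ‖s‖ ^ 2 - ‖t‖ ^ 2 + 1))) *
          (‖s‖ ^ 2 * (‖z‖ ^ 2 + ‖w‖ ^ 2)
            + 2 * (s * (starRingEnd ℂ) z * w).re))) ∧
    (‖s‖ ^ 2 ≥ ‖t‖ ^ 2 + 1 →
      ∀ z w : ℂ,
        Real.exp (-(‖z‖ ^ 2 + ‖w‖ ^ 2) / 2) * ‖Kst s t z w‖ ≤
          C * Real.exp (-((‖s‖ ^ 2 - ‖t‖ ^ 2 - 1) /
              (2 * ‖s‖ ^ 2 * (3 * ‖s‖ ^ 2 - ‖t‖ ^ 2 + 1))) *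
            ‖z + s * w‖ ^ 2)) := by
  have hCge : ‖s‖ ^ (-(1 : ℝ) / 2) ≤ C := hC ▸ rpow_neg_half_le_kernel_constant (norm_nonneg t) hst
  have bound (z w : ℂ) := (exp_mul_norm_Kst_le hst z w).trans
    (mul_le_mul_of_nonneg_right hCge (Real.exp_nonneg _))
  refine ⟨bound, fun hge z w => (bound z w).trans ?_⟩
  have hs : 1 ≤ ‖s‖ := by nlinarith [sq_nonneg ‖t‖, norm_nonneg s]
  have hrate : 0 ≤ decayRate ‖s‖ ‖t‖ := div_nonneg (by linarith) (by nlinarith)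
  gcongr ?_ * Real.exp ?_
  · exact (by positivity : (0 : ℝ) ≤ _).trans hCge
  · exact mul_le_mul_of_nonpos_left (norm_add_mul_sq_le hs z w) (neg_nonpos.2 hrate)
end

section
/- Let s, t ∈ ℂ with |s| > |t|. Then for all z, w ∈ ℂ, ∫_ℂ |K^{(s,t)}(v,w)·e^{v·conj(z)}|·dλ(v) = (2√|s|/√(4|s|²−|t|²)) · |exp( −conj(t)·conj(w)²/(2s) + s·t·(w + conj(s)·z)²/(2|s|²·(4|s|²−|t|²)) )| · exp( |w + conj(s)·z|²/(4|s|²−|t|²) ). -/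
open MeasureTheory Real Filter

/-- Density of the Gaussian measure `dλ(z) = π⁻¹ e^{-|z|²} dA(z)` with respect to
Lebesgue area measure on `ℂ`. -/
noncomputable def gw (z : ℂ) : ℝ := Real.exp (-‖z‖ ^ 2) / Real.pi

/-!
Up to the constant factor `|s|^{-1/2} |exp (-t̄ w̄² / (2s))| / π`, the integrand is
`exp (Re (a v² + b v) - |v|²)` with `a = t / (2s)`, `b = conj (w + s̄ z) / s`, and `|a| < 1/2`.
Rotating `v` by a square root of `ā / |a|` makes `a` real; the integral over `ℂ = ℝ²` then factors
into two one-dimensional Gaussian integrals, with quadratic coefficients `1 - |a|` and `1 + |a|`,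
whose product is `π / √(1 - |a|²) · exp ((|b|² + Re (ā b²)) / (4 (1 - |a|²)))`.
-/

open ComplexConjugate

theorem integral_exp_neg_mul_sq_add_mul {k : ℝ} (hk : 0 < k) (c : ℝ) :
    ∫ x : ℝ, rexp (-k * x ^ 2 + c * x) = √(π / k) * rexp (c ^ 2 / (4 * k)) := by
  apply Complex.ofReal_injective
  have h := integral_cexp_quadratic (b := -k) (by simpa using hk) c 0
  have hsqrt : ((π : ℂ) / k) ^ (1 / 2 : ℂ) = (√(π / k) : ℝ) := by
    rw [sqrt_eq_rpow, Complex.ofReal_cpow (by positivity)]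
    push_cast
    rfl
  rw [← integral_complex_ofReal]
  push_cast at h ⊢
  simp only [add_zero, zero_sub, neg_neg] at h
  rw [h, hsqrt]
  congr 2
  ring

theorem integral_complex_eq_integral_prod {E : Type*} [NormedAddCommGroup E] [NormedSpace ℝ E]
    (f : ℂ → E) : ∫ v : ℂ, f v = ∫ p : ℝ × ℝ, f ⟨p.1, p.2⟩ :=
  (Complex.volume_preserving_equiv_real_prod.symm.integral_comp
    Complex.measurableEquivRealProd.symm.measurableEmbedding f).symm

theorem integral_comp_circle_mul {E : Type*} [NormedAddCommGroup E] [NormedSpace ℝ E]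
    (c : Circle) (f : ℂ → E) : ∫ v : ℂ, f (c * v) = ∫ v : ℂ, f v := by
  simpa [rotation_apply] using ((rotation c).measurePreserving).integral_comp
    (rotation c).toHomeomorph.measurableEmbedding f

theorem exists_circle_mul_sq_eq_norm (a : ℂ) : ∃ c : Circle, a * (c : ℂ) ^ 2 = ‖a‖ := by
  refine ⟨Circle.exp (-a.arg / 2), ?_⟩
  have h : ((2 : ℕ) : ℂ) * (((-a.arg / 2 : ℝ) : ℂ) * Complex.I) = -(a.arg * Complex.I) := by
    push_cast; ring
  rw [Circle.coe_exp, ← Complex.exp_nat_mul, h]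
  nth_rewrite 1 [← Complex.norm_mul_exp_arg_mul_I a]
  rw [mul_assoc, ← Complex.exp_add, add_neg_cancel, Complex.exp_zero, mul_one]

theorem integral_exp_re_ofReal_mul_sq_add_mul_sub_norm_sq {r : ℝ} (hr : |r| < 1) (b : ℂ) :
    ∫ v : ℂ, rexp (((r : ℂ) * v ^ 2 + b * v).re - ‖v‖ ^ 2)
      = π / √(1 - r ^ 2) * rexp ((‖b‖ ^ 2 + r * (b ^ 2).re) / (4 * (1 - r ^ 2))) := by
  obtain ⟨hr₁, hr₂⟩ := abs_lt.mp hr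
  have hsub : 0 < 1 - r := by linarith
  have hadd : 0 < 1 + r := by linarith
  have hsq : 0 < 1 - r ^ 2 := by nlinarith
  have hsplit (x y : ℝ) :
      rexp (((r : ℂ) * (⟨x, y⟩ : ℂ) ^ 2 + b * (⟨x, y⟩ : ℂ)).re - ‖(⟨x, y⟩ : ℂ)‖ ^ 2)
        = rexp (-(1 - r) * x ^ 2 + b.re * x) * rexp (-(1 + r) * y ^ 2 + -b.im * y) := by
    rw [← Real.exp_add, Complex.sq_norm, Complex.normSq_mk]
    simp only [sq, Complex.add_re, Complex.mul_re, Complex.mul_im, Complex.ofReal_re,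
      Complex.ofReal_im]
    ring_nf
  have hsqrt : √(π / (1 - r)) * √(π / (1 + r)) = π / √(1 - r ^ 2) := by
    rw [← sqrt_mul (by positivity), show π / (1 - r) * (π / (1 + r)) = π ^ 2 / (1 - r ^ 2) by
      field_simp; ring, sqrt_div (sq_nonneg π), sqrt_sq pi_pos.le]
  have hexp : b.re ^ 2 / (4 * (1 - r)) + (-b.im) ^ 2 / (4 * (1 + r))
      = (‖b‖ ^ 2 + r * (b ^ 2).re) / (4 * (1 - r ^ 2)) := by
    rw [Complex.sq_norm, Complex.normSq_apply, sq b, Complex.mul_re]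
    field_simp
    ring
  rw [integral_complex_eq_integral_prod, Measure.volume_eq_prod]
  simp only [hsplit]
  rw [integral_prod_mul (fun x : ℝ ↦ rexp (-(1 - r) * x ^ 2 + b.re * x))
      (fun y : ℝ ↦ rexp (-(1 + r) * y ^ 2 + -b.im * y)),
    integral_exp_neg_mul_sq_add_mul hsub, integral_exp_neg_mul_sq_add_mul hadd, ← hsqrt, ← hexp,
    Real.exp_add]
  ring

theorem integral_exp_re_mul_sq_add_mul_sub_norm_sq {a : ℂ} (ha : ‖a‖ < 1) (b : ℂ) :
    ∫ v : ℂ, rexp ((a * v ^ 2 + b * v).re - ‖v‖ ^ 2)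
      = π / √(1 - ‖a‖ ^ 2) * rexp ((‖b‖ ^ 2 + (conj a * b ^ 2).re) / (4 * (1 - ‖a‖ ^ 2))) := by
  obtain ⟨c, hc⟩ := exists_circle_mul_sq_eq_norm a
  have hconj : conj a = ‖a‖ * (c : ℂ) ^ 2 := by
    have h := congrArg conj hc
    rw [map_mul, map_pow, Complex.conj_ofReal] at h
    rw [← h, mul_assoc, ← mul_pow, Complex.conj_mul', Circle.norm_coe]
    simp
  have hrot (v : ℂ) : a * (c * v) ^ 2 + b * (c * v) = (‖a‖ : ℂ) * v ^ 2 + (b * c) * v := by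
    rw [← hc]; ring
  rw [← integral_comp_circle_mul c]
  simp only [hrot, norm_mul, Circle.norm_coe, one_mul]
  rw [integral_exp_re_ofReal_mul_sq_add_mul_sub_norm_sq (by rwa [abs_norm]), norm_mul,
    Circle.norm_coe, mul_one, hconj, ← Complex.re_ofReal_mul, mul_pow, ← mul_assoc,
    mul_right_comm _ (b ^ 2)]

theorem norm_csqrt (z : ℂ) : ‖csqrt z‖ = √‖z‖ := by
  rw [csqrt, show (1 : ℂ) / 2 = ((1 / 2 : ℝ) : ℂ) by norm_num, Complex.norm_cpow_real,
    sqrt_eq_rpow]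

theorem norm_Kst_mul_exp_mul_gw (s t z w v : ℂ) :
    ‖Kst s t v w * Complex.exp (v * conj z)‖ * gw v
      = (√‖s‖)⁻¹ * rexp (-(conj t / (2 * s)) * conj w ^ 2).re / π
        * rexp ((t / (2 * s) * v ^ 2 + (conj z + conj w / s) * v).re - ‖v‖ ^ 2) := by
  have hexp : (t * v ^ 2 - conj t * conj w ^ 2 + 2 * v * conj w) / (2 * s) + v * conj z
      = -(conj t / (2 * s)) * conj w ^ 2 + (t / (2 * s) * v ^ 2 + (conj z + conj w / s) * v) := by
    ring
  have hre := congrArg (fun u : ℂ ↦ rexp u.re) hexp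
  simp only [Complex.add_re, Real.exp_add] at hre
  rw [Kst, gw, norm_mul, norm_mul, norm_inv, norm_csqrt, Complex.norm_exp, Complex.norm_exp,
    Real.exp_sub, Real.exp_neg, Complex.add_re, Real.exp_add]
  linear_combination (√‖s‖)⁻¹ * (rexp (‖v‖ ^ 2))⁻¹ / π * hre

theorem conj_add_conj_div {s : ℂ} (hs : s ≠ 0) (z w : ℂ) :
    conj z + conj w / s = conj (w + conj s * z) / s := by
  rw [map_add, map_mul, Complex.conj_conj]
  field_simp
  ring

theorem one_sub_norm_div_two_mul_sq {s : ℂ} (hs : s ≠ 0) (t : ℂ) :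
    1 - ‖t / (2 * s)‖ ^ 2 = (4 * ‖s‖ ^ 2 - ‖t‖ ^ 2) / (4 * ‖s‖ ^ 2) := by
  have : ‖s‖ ≠ 0 := norm_ne_zero_iff.mpr hs
  rw [norm_div, norm_mul, Complex.norm_two]
  field_simp
  ring

theorem sqrt_one_sub_norm_div_two_mul_sq {s : ℂ} (hs : s ≠ 0) (t : ℂ) :
    √(1 - ‖t / (2 * s)‖ ^ 2) = √(4 * ‖s‖ ^ 2 - ‖t‖ ^ 2) / (2 * ‖s‖) := by
  rw [one_sub_norm_div_two_mul_sq hs, sqrt_div' _ (by positivity),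
    show 4 * ‖s‖ ^ 2 = (2 * ‖s‖) ^ 2 by ring, sqrt_sq (by positivity)]

theorem kernel_gaussian_exponent_eq {s t : ℂ} (hst : ‖t‖ < ‖s‖) (q : ℂ) :
    (‖conj q / s‖ ^ 2 + (conj (t / (2 * s)) * (conj q / s) ^ 2).re)
        / (4 * (1 - ‖t / (2 * s)‖ ^ 2))
      = (s * t * q ^ 2 / (2 * (‖s‖ ^ 2 : ℝ) * ((4 * ‖s‖ ^ 2 - ‖t‖ ^ 2 : ℝ)))).re
        + ‖q‖ ^ 2 / (4 * ‖s‖ ^ 2 - ‖t‖ ^ 2) := by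
  have hs₀ : 0 < ‖s‖ := (norm_nonneg t).trans_lt hst
  have hs : s ≠ 0 := norm_pos_iff.mp hs₀
  have hD : 0 < 4 * ‖s‖ ^ 2 - ‖t‖ ^ 2 := by nlinarith [norm_nonneg t]
  have hconj : conj (conj (t / (2 * s)) * (conj q / s) ^ 2)
      = s * t * q ^ 2 / ((2 * ‖s‖ ^ 4 : ℝ) : ℂ) := by
    have hss : ((‖s‖ ^ 2 : ℝ) : ℂ) = s * conj s := by
      rw [Complex.mul_conj, Complex.normSq_eq_norm_sq]
    have hcs : conj s ≠ 0 := (map_ne_zero _).mpr hs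
    simp only [map_mul, map_div₀, map_pow, Complex.conj_conj, map_ofNat]
    rw [show ((2 * ‖s‖ ^ 4 : ℝ) : ℂ) = 2 * ((‖s‖ ^ 2 : ℝ) : ℂ) ^ 2 by push_cast; ring, hss]
    field_simp
  have hre : (conj (t / (2 * s)) * (conj q / s) ^ 2).re = (s * t * q ^ 2).re / (2 * ‖s‖ ^ 4) := by
    rw [← Complex.conj_re, hconj, Complex.div_ofReal_re]
  have hre' : (s * t * q ^ 2 / (2 * (‖s‖ ^ 2 : ℝ) * ((4 * ‖s‖ ^ 2 - ‖t‖ ^ 2 : ℝ)))).re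
      = (s * t * q ^ 2).re / (2 * ‖s‖ ^ 2 * (4 * ‖s‖ ^ 2 - ‖t‖ ^ 2)) := by
    rw [← Complex.div_ofReal_re]
    push_cast
    rfl
  rw [hre, hre', one_sub_norm_div_two_mul_sq hs, norm_div, Complex.norm_conj]
  field_simp
  ring

theorem stmt3 (s t : ℂ) (hst : ‖t‖ < ‖s‖) :
    ∀ z w : ℂ,
      (∫ v : ℂ, ‖Kst s t v w * Complex.exp (v * (starRingEnd ℂ) z)‖ * gw v)
        = (2 * Real.sqrt (‖s‖) / Real.sqrt (4 * ‖s‖ ^ 2 - ‖t‖ ^ 2))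
          * ‖(Complex.exp
              (-((starRingEnd ℂ) t / (2 * s)) * ((starRingEnd ℂ) w) ^ 2
                + s * t * (w + (starRingEnd ℂ) s * z) ^ 2 /
                  (2 * (‖s‖ ^ 2 : ℝ) * ((4 * ‖s‖ ^ 2 - ‖t‖ ^ 2 : ℝ)))))‖
          * Real.exp (‖w + (starRingEnd ℂ) s * z‖ ^ 2 /
              (4 * ‖s‖ ^ 2 - ‖t‖ ^ 2)) := by
  intro z w
  have hs₀ : 0 < ‖s‖ := (norm_nonneg t).trans_lt hst
  have hs : s ≠ 0 := norm_pos_iff.mp hs₀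
  have ha : ‖t / (2 * s)‖ < 1 := by
    rw [norm_div, norm_mul, Complex.norm_two, div_lt_one (by positivity)]
    linarith
  simp_rw [norm_Kst_mul_exp_mul_gw, conj_add_conj_div hs]
  rw [integral_const_mul, integral_exp_re_mul_sq_add_mul_sub_norm_sq ha,
    kernel_gaussian_exponent_eq hst, sqrt_one_sub_norm_div_two_mul_sq hs, Complex.norm_exp,
    Complex.add_re, Real.exp_add, Real.exp_add]
  field_simp
  rw [sq_sqrt hs₀.le]
end
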